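/- Let M be a commutative R-algebra and H a cocommutative R-coalgebra. Then there exists a commutative R-algebra H(M), universal among commutative R-algebras A equipped with a linear map H⊗M → A, (h,m) ↦ h(m), satisfying h(mn) = Σ h'(m)h''(n) and h(1) = η(h)·1 (where Δ(h) = Σ h'⊗h''). -/

import Mathlib

open TensorProduct Coalgebra

/-- A bundled commutative algebra over `R`. -/
structure CommAlgebraOver (R : Type) [CommRing R] : Type 1 where
  carrier : Type
  [commRing : CommRing carrier]
  [algebra : Algebra R carrier]

attribute [instance] CommAlgebraOver.commRing CommAlgebraOver.algebra

/-- The map `φ : H ⊗ M → A`, `(h, m) ↦ h(m)`, satisfies `h(mn) = Σ h'(m)h''(n)`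
and `h(1) = η(h)·1`. -/
def Measures (R H M A : Type) [CommRing R] [AddCommGroup H] [Module R H]
    [Coalgebra R H] [CommRing M] [Algebra R M] [CommRing A] [Algebra R A]
    (φ : H →ₗ[R] M →ₗ[R] A) : Prop :=
  (∀ h : H, φ h 1 = algebraMap R A (counit (R := R) h)) ∧
  (∀ (h : H) (m n : M) (ι : Type) (t : Finset ι) (h₁ h₂ : ι → H),
    comul (R := R) h = ∑ i ∈ t, h₁ i ⊗ₜ[R] h₂ i →
    φ h (m * n) = ∑ i ∈ t, φ (h₁ i) m * φ (h₂ i) n)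

/-!
`H(M)` is the free commutative algebra on symbols `h(m)` bilinear in `(h, m)`, i.e. the symmetric
algebra on `H ⊗ M`, divided by the ideal generated by the two measuring identities. Algebra maps
`Sym(H ⊗ M) → A` are the same as linear maps `H ⊗ M → A`, and such a map measures exactly when it
kills those generators, so measuring maps into `A` correspond to algebra maps `H(M) → A`.
-/

namespace MeasuringAlgebra

variable (R H M : Type) [CommRing R] [AddCommGroup H] [Module R H] [CommRing M] [Algebra R M]

noncomputable def generator : H →ₗ[R] M →ₗ[R] SymmetricAlgebra R (H ⊗[R] M) :=
  TensorProduct.curry (SymmetricAlgebra.ι R (H ⊗[R] M))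

variable {R H M} {A : Type} [CommRing A] [Algebra R A]

theorem generator_compr₂_lift (ψ : H →ₗ[R] M →ₗ[R] A) :
    (generator R H M).compr₂ (SymmetricAlgebra.lift (TensorProduct.lift ψ)).toLinearMap = ψ := by
  ext
  simp [generator]

variable (R H M) [Coalgebra R H]

def relations : Set (SymmetricAlgebra R (H ⊗[R] M)) :=
  { p | ∃ h : H, p = generator R H M h 1 - algebraMap R _ (counit (R := R) h) } ∪
  { p | ∃ (h : H) (m n : M) (ι : Type) (t : Finset ι) (h₁ h₂ : ι → H),
      comul (R := R) h = ∑ i ∈ t, h₁ i ⊗ₜ[R] h₂ i ∧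
      p = generator R H M h (m * n) -
        ∑ i ∈ t, generator R H M (h₁ i) m * generator R H M (h₂ i) n }

variable {R H M}

theorem measures_compr₂_iff (f : SymmetricAlgebra R (H ⊗[R] M) →ₐ[R] A) :
    Measures R H M A ((generator R H M).compr₂ f.toLinearMap) ↔
      Ideal.span (relations R H M) ≤ RingHom.ker f := by
  simp only [Ideal.span_le, relations, Set.union_subset_iff]
  constructor
  · rintro ⟨hunit, hmul⟩
    constructor
    · rintro _ ⟨h, rfl⟩
      simpa [sub_eq_zero] using hunit h
    · rintro _ ⟨h, m, n, ι, t, h₁, h₂, hc, rfl⟩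
      simpa [sub_eq_zero] using hmul h m n ι t h₁ h₂ hc
  · rintro ⟨hunit, hmul⟩
    constructor
    · intro h
      simpa [sub_eq_zero] using hunit ⟨h, rfl⟩
    · intro h m n ι t h₁ h₂ hc
      simpa [sub_eq_zero] using hmul ⟨h, m, n, ι, t, h₁, h₂, hc, rfl⟩

end MeasuringAlgebra

open MeasuringAlgebra in
abbrev MeasuringAlgebra (R H M : Type) [CommRing R] [AddCommGroup H] [Module R H]
    [Coalgebra R H] [CommRing M] [Algebra R M] : Type :=
  SymmetricAlgebra R (H ⊗[R] M) ⧸ Ideal.span (relations R H M)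

namespace MeasuringAlgebra

variable (R H M : Type) [CommRing R] [AddCommGroup H] [Module R H] [Coalgebra R H]
  [CommRing M] [Algebra R M]

noncomputable def measure : H →ₗ[R] M →ₗ[R] MeasuringAlgebra R H M :=
  (generator R H M).compr₂ (Ideal.Quotient.mkₐ R _).toLinearMap

theorem measures_measure : Measures R H M (MeasuringAlgebra R H M) (measure R H M) :=
  (measures_compr₂_iff _).2 (Ideal.Quotient.mkₐ_ker R _).ge

variable {R H M} {B : Type} [CommRing B] [Algebra R B]

noncomputable def lift (ψ : H →ₗ[R] M →ₗ[R] B) (hψ : Measures R H M B ψ) :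
    MeasuringAlgebra R H M →ₐ[R] B :=
  Ideal.Quotient.liftₐ _ (SymmetricAlgebra.lift (TensorProduct.lift ψ)) fun _ hp ↦
    RingHom.mem_ker.1 <| (measures_compr₂_iff _).1 (by rwa [generator_compr₂_lift]) hp

@[simp]
theorem lift_measure (ψ : H →ₗ[R] M →ₗ[R] B) (hψ : Measures R H M B ψ) (h : H) (m : M) :
    lift ψ hψ (measure R H M h m) = ψ h m :=
  LinearMap.congr_fun₂ (generator_compr₂_lift ψ) h m

theorem algHom_ext {f g : MeasuringAlgebra R H M →ₐ[R] B}
    (hfg : ∀ h m, f (measure R H M h m) = g (measure R H M h m)) : f = g :=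
  Ideal.Quotient.algHom_ext R <| SymmetricAlgebra.algHom_ext <| TensorProduct.ext' hfg

end MeasuringAlgebra

theorem universal_measuring_algebra_exists_general (R H M : Type) [CommRing R]
    [AddCommGroup H] [Module R H] [Coalgebra R H]
    [CommRing M] [Algebra R M] :
    ∃ (A : CommAlgebraOver R) (φ : H →ₗ[R] M →ₗ[R] A.carrier),
      Measures R H M A.carrier φ ∧
      ∀ (B : CommAlgebraOver R) (ψ : H →ₗ[R] M →ₗ[R] B.carrier),
        Measures R H M B.carrier ψ →
        ∃! f : A.carrier →ₐ[R] B.carrier, ∀ (h : H) (m : M), f (φ h m) = ψ h m :=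
  ⟨⟨MeasuringAlgebra R H M⟩, MeasuringAlgebra.measure R H M,
    MeasuringAlgebra.measures_measure R H M, fun _ ψ hψ ↦
    ⟨MeasuringAlgebra.lift ψ hψ, MeasuringAlgebra.lift_measure ψ hψ, fun _ hg ↦
      MeasuringAlgebra.algHom_ext fun h m ↦
        (hg h m).trans (MeasuringAlgebra.lift_measure ψ hψ h m).symm⟩⟩

/-- For a commutative `R`-algebra `M` and a cocommutative `R`-coalgebra `H`,
there exists a universal commutative `R`-algebra `H(M)` equipped with a map
`H ⊗ M → H(M)`, `(h, m) ↦ h(m)`, satisfying `h(mn) = Σ h'(m)h''(n)` and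
`h(1) = η(h)·1`. -/
theorem universal_measuring_algebra_exists (R H M : Type) [CommRing R]
    [AddCommGroup H] [Module R H] [Coalgebra R H]
    (hcoc : ∀ h : H, TensorProduct.comm R H H (comul (R := R) h) = comul (R := R) h)
    [CommRing M] [Algebra R M] :
    ∃ (A : CommAlgebraOver R) (φ : H →ₗ[R] M →ₗ[R] A.carrier),
      Measures R H M A.carrier φ ∧
      ∀ (B : CommAlgebraOver R) (ψ : H →ₗ[R] M →ₗ[R] B.carrier),
        Measures R H M B.carrier ψ →
        ∃! f : A.carrier →ₐ[R] B.carrier, ∀ (h : H) (m : M), f (φ h m) = ψ h m :=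
  universal_measuring_algebra_exists_general R H M
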